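/- arXiv:1111.0357 — 3 statements merged into one kernel-verified Lean document; each statement's English description precedes it below -/
import Mathlib

section
/- For the monodromy matrices M0 = [[1,1,0,0],[0,1,0,0],[5,5,1,0],[0,-5,-1,1]] and M1 = [[1,0,0,0],[0,1,0,1],[0,0,1,0],[0,0,0,1]], the product M0·M1 satisfies (M0·M1)^5 = I (the 4×4 identity matrix). -/
open Matrix

def M0 : Matrix (Fin 4) (Fin 4) ℤ :=
  !![1,1,0,0; 0,1,0,0; 5,5,1,0; 0,-5,-1,1]

def M1 : Matrix (Fin 4) (Fin 4) ℤ :=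
  !![1,0,0,0; 0,1,0,1; 0,0,1,0; 0,0,0,1]

set_option maxHeartbeats 1000000 in
theorem stmt1 : (M0 * M1) ^ 5 = (1 : Matrix (Fin 4) (Fin 4) ℤ) := by
  have hA : M0 * M1 = !![1,1,0,1; 0,1,0,1; 5,5,1,5; 0,-5,-1,-4] := by
    ext i j; fin_cases i <;> fin_cases j <;>
      simp [M0, M1, Matrix.mul_apply, Fin.sum_univ_four, Matrix.vecHead, Matrix.vecTail]
  have h2 : (M0 * M1) ^ 2 = !![1,-3,-1,-2; 0,-4,-1,-3; 10,-10,-4,-5; -5,10,3,6] := by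
    rw [sq, hA]; ext i j; fin_cases i <;> fin_cases j <;>
      simp [Matrix.mul_apply, Fin.sum_univ_four, Matrix.vecHead, Matrix.vecTail]
  have e4 : (M0 * M1) ^ 4 = (M0 * M1) ^ 2 * (M0 * M1) ^ 2 := by
    rw [← sq, ← pow_mul]
  have h4 : (M0 * M1) ^ 4 = !![1,-1,0,0; 5,-4,-1,-1; -5,0,1,0; -5,5,1,1] := by
    rw [e4, h2]
    ext i j; fin_cases i <;> fin_cases j <;>
      simp [Matrix.mul_apply, Fin.sum_univ_four, Matrix.vecHead, Matrix.vecTail]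
  have e5 : (M0 * M1) ^ 5 = (M0 * M1) ^ 4 * (M0 * M1) := pow_succ _ 4
  rw [e5, h4, hA]
  ext i j; fin_cases i <;> fin_cases j <;>
    simp [Matrix.mul_apply, Fin.sum_univ_four, Matrix.one_apply, Matrix.vecHead, Matrix.vecTail]
end

section
/- Let x = [x_{ij}] be a 4×4 complex matrix satisfying x^T Ψ x = Φ (with Ψ, Φ as usual), x21 ≠ 0 and x11x22 - x12x21 ≠ 0. Then there exists a unique upper triangular matrix g with g^T Φ g = Φ such that the product xg has the form [[τ0,1,0,0],[1,0,0,0],[τ1,τ3,1,0],[τ2, -τ0τ3+τ1, -τ0, 1]] for some complex numbers τ0, τ1, τ2, τ3. -/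
/-!
Since `Phi * Phi = -1`, the relation `xᵀ * Psi * x = Phi` makes `-Phi * xᵀ * Psi` a two-sided
inverse of `x`, so `g` is forced to be `x⁻¹ * N τ`, and it preserves `Phi` because `N τ`
satisfies the same relation as `x`. If `g` is upper triangular, the first two columns of
`x * g = N τ` express `τ` through the entries of `x`, which gives uniqueness. Conversely, for these
`τ` the matrix `x⁻¹ * N τ` is upper triangular thanks to the two relations
`(xᵀ * Psi * x) 0 1 = (xᵀ * Psi * x) 0 2 = 0`.
-/

open Matrix

def Psi : Matrix (Fin 4) (Fin 4) ℂ :=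
  !![0,0,1,0; 0,0,0,1; -1,0,0,0; 0,-1,0,0]

def Phi : Matrix (Fin 4) (Fin 4) ℂ :=
  !![0,0,0,1; 0,0,1,0; 0,-1,0,0; -1,0,0,0]

/-- The normalized period matrix with parameters τ₀, τ₁, τ₂, τ₃. -/
def N (τ0 τ1 τ2 τ3 : ℂ) : Matrix (Fin 4) (Fin 4) ℂ :=
  !![τ0, 1, 0, 0;
     1, 0, 0, 0;
     τ1, τ3, 1, 0;
     τ2, -τ0*τ3+τ1, -τ0, 1]

lemma Matrix.transpose_mul_mul_mul_of_transpose_mul_mul_eq {n R : Type*} [Fintype n]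
    [CommRing R] {A B x : Matrix n n R} (h : xᵀ * A * x = B) (g : Matrix n n R) :
    gᵀ * B * g = (x * g)ᵀ * A * (x * g) := by
  simp only [← h, transpose_mul, Matrix.mul_assoc]

lemma Phi_mul_Phi : Phi * Phi = -1 := by
  ext i j
  fin_cases i <;> fin_cases j <;> simp [Phi, mul_apply, Fin.sum_univ_four, one_apply]

lemma transpose_N_mul_Psi_mul_N (τ0 τ1 τ2 τ3 : ℂ) :
    (N τ0 τ1 τ2 τ3)ᵀ * Psi * N τ0 τ1 τ2 τ3 = Phi := by
  ext i j
  fin_cases i <;> fin_cases j <;> simp [N, Psi, Phi, mul_apply, Fin.sum_univ_four] <;> ring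

def sympInv (x : Matrix (Fin 4) (Fin 4) ℂ) : Matrix (Fin 4) (Fin 4) ℂ :=
  -Phi * xᵀ * Psi

lemma sympInv_eq (x : Matrix (Fin 4) (Fin 4) ℂ) :
    sympInv x = !![x 2 3, x 3 3, -x 0 3, -x 1 3;
                   x 2 2, x 3 2, -x 0 2, -x 1 2;
                   -x 2 1, -x 3 1, x 0 1, x 1 1;
                   -x 2 0, -x 3 0, x 0 0, x 1 0] := by
  ext i j
  fin_cases i <;> fin_cases j <;>
    simp [sympInv, Phi, Psi, mul_apply, Fin.sum_univ_four, vecMul, dotProduct]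

section

variable {x : Matrix (Fin 4) (Fin 4) ℂ}

lemma sympInv_mul (h : xᵀ * Psi * x = Phi) : sympInv x * x = 1 := by
  rw [sympInv, Matrix.mul_assoc, Matrix.mul_assoc, ← Matrix.mul_assoc xᵀ, h, Matrix.neg_mul,
    Phi_mul_Phi, neg_neg]

lemma mul_sympInv (h : xᵀ * Psi * x = Phi) : x * sympInv x = 1 :=
  mul_eq_one_comm.mp (sympInv_mul h)

/-- Column `0` of `N τ0 τ1 τ2 τ3` is column `0` of `x` divided by `x 1 0`, and `τ3` is read off
column `1` by Cramer's rule on the leading `2 × 2` block of `x`. -/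
def IsNormalParam (x : Matrix (Fin 4) (Fin 4) ℂ) (τ0 τ1 τ2 τ3 : ℂ) : Prop :=
  x 1 0 * τ0 = x 0 0 ∧ x 1 0 * τ1 = x 2 0 ∧ x 1 0 * τ2 = x 3 0 ∧
    (x 0 0 * x 1 1 - x 0 1 * x 1 0) * τ3 = x 1 1 * x 2 0 - x 1 0 * x 2 1

lemma exists_isNormalParam (h21 : x 1 0 ≠ 0) (hd : x 0 0 * x 1 1 - x 0 1 * x 1 0 ≠ 0) :
    ∃ τ0 τ1 τ2 τ3, IsNormalParam x τ0 τ1 τ2 τ3 :=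
  ⟨_, _, _, _, mul_div_cancel₀ _ h21, mul_div_cancel₀ _ h21, mul_div_cancel₀ _ h21,
    mul_div_cancel₀ _ hd⟩

lemma IsNormalParam.N_eq {τ0 τ1 τ2 τ3 σ0 σ1 σ2 σ3 : ℂ} (h21 : x 1 0 ≠ 0)
    (hd : x 0 0 * x 1 1 - x 0 1 * x 1 0 ≠ 0) (hτ : IsNormalParam x τ0 τ1 τ2 τ3)
    (hσ : IsNormalParam x σ0 σ1 σ2 σ3) : N τ0 τ1 τ2 τ3 = N σ0 σ1 σ2 σ3 := by
  obtain ⟨hτ0, hτ1, hτ2, hτ3⟩ := hτ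
  obtain ⟨hσ0, hσ1, hσ2, hσ3⟩ := hσ
  rw [mul_left_cancel₀ h21 (hτ0.trans hσ0.symm), mul_left_cancel₀ h21 (hτ1.trans hσ1.symm),
    mul_left_cancel₀ h21 (hτ2.trans hσ2.symm), mul_left_cancel₀ hd (hτ3.trans hσ3.symm)]

lemma isNormalParam_of_mul_eq_N {g : Matrix (Fin 4) (Fin 4) ℂ} {τ0 τ1 τ2 τ3 : ℂ}
    (hg : g.IsUpperTriangular) (hxg : x * g = N τ0 τ1 τ2 τ3) : IsNormalParam x τ0 τ1 τ2 τ3 := by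
  have entry (i j : Fin 4) : ∑ k, x i k * g k j = N τ0 τ1 τ2 τ3 i j := by
    rw [← hxg, mul_apply]
  have e00 := entry 0 0
  have e10 := entry 1 0
  have e20 := entry 2 0
  have e30 := entry 3 0
  have e01 := entry 0 1
  have e11 := entry 1 1
  have e21 := entry 2 1
  simp only [BlockTriangular, id] at hg
  simp only [Fin.isValue, Fin.sum_univ_four, zero_lt_one, hg, mul_zero, add_zero, Fin.reduceLT, N,
    neg_mul, of_apply, cons_val', cons_val_zero, cons_val_fin_one, cons_val_one, cons_val]
    at e00 e10 e20 e30 e01 e11 e21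
  refine ⟨?_, ?_, ?_, ?_⟩
  · linear_combination -x 1 0 * e00 + x 0 0 * e10
  · linear_combination -x 1 0 * e20 + x 2 0 * e10
  · linear_combination -x 1 0 * e30 + x 3 0 * e10
  · linear_combination -(x 0 0 * x 1 1 - x 0 1 * x 1 0) * e21 + x 2 0 * (x 1 1 * e01 - x 0 1 * e11)
      + x 2 1 * (x 0 0 * e11 - x 1 0 * e01)

lemma IsNormalParam.isUpperTriangular_sympInv_mul_N {τ0 τ1 τ2 τ3 : ℂ}
    (h : xᵀ * Psi * x = Phi) (h21 : x 1 0 ≠ 0) (hτ : IsNormalParam x τ0 τ1 τ2 τ3) :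
    (sympInv x * N τ0 τ1 τ2 τ3).IsUpperTriangular := by
  obtain ⟨h0, h1, h2, h3⟩ := hτ
  have hx01 := congrFun₂ h 0 1
  have hx02 := congrFun₂ h 0 2
  simp only [Psi, Phi, Fin.isValue, mul_apply, transpose_apply, of_apply, cons_val', cons_val_fin_one,
    Fin.sum_univ_four, cons_val_zero, cons_val_one, cons_val, mul_zero, add_zero, mul_neg, mul_one,
    zero_add, neg_mul] at hx01 hx02
  intro i j hij
  rw [sympInv_eq]
  fin_cases i <;> fin_cases j <;> try exact absurd hij (by decide)
  all_goals simp only [N, mul_apply, Fin.sum_univ_four, of_apply, cons_val', cons_val_zero, cons_val_one,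
    cons_val, cons_val_fin_one, Fin.isValue, Fin.zero_eta, Fin.mk_one, Fin.reduceFinMk]
  all_goals refine mul_left_cancel₀ h21 ?_
  · linear_combination x 2 2 * h0 - x 0 2 * h1 - x 1 2 * h2 + hx02
  · linear_combination -x 2 1 * h0 + x 0 1 * h1 + x 1 1 * h2 - hx01
  · linear_combination -x 1 1 * τ3 * h0 + x 1 1 * h1 - h3
  · linear_combination -x 2 0 * h0 + x 0 0 * h1 + x 1 0 * h2
  · linear_combination x 1 0 * (-τ3 * h0 + h1)
  · linear_combination -x 1 0 * h0

end

theorem stmt8 (x : Matrix (Fin 4) (Fin 4) ℂ) (h : xᵀ * Psi * x = Phi)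
    (h21 : x 1 0 ≠ 0) (hd : x 0 0 * x 1 1 - x 0 1 * x 1 0 ≠ 0) :
    ∃! g : Matrix (Fin 4) (Fin 4) ℂ,
      (∀ i j : Fin 4, j < i → g i j = 0) ∧ gᵀ * Phi * g = Phi ∧
      ∃ τ0 τ1 τ2 τ3 : ℂ, x * g = N τ0 τ1 τ2 τ3 := by
  obtain ⟨t0, t1, t2, t3, ht⟩ := exists_isNormalParam h21 hd
  have hxg : x * (sympInv x * N t0 t1 t2 t3) = N t0 t1 t2 t3 := by
    rw [← Matrix.mul_assoc, mul_sympInv h, Matrix.one_mul]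
  refine ⟨sympInv x * N t0 t1 t2 t3,
    ⟨ht.isUpperTriangular_sympInv_mul_N h h21, ?_, t0, t1, t2, t3, hxg⟩, ?_⟩
  · rw [transpose_mul_mul_mul_of_transpose_mul_mul_eq h, hxg, transpose_N_mul_Psi_mul_N]
  · rintro g ⟨hg, -, s0, s1, s2, s3, hxg'⟩
    calc g = sympInv x * (x * g) := by rw [← Matrix.mul_assoc, sympInv_mul h, Matrix.one_mul]
      _ = sympInv x * N t0 t1 t2 t3 := by
        rw [hxg', (isNormalParam_of_mul_eq_N hg hxg').N_eq h21 hd ht]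
end

section
/- Let A0 be the 7×7 Jacobian matrix [∂(t5·R_i)/∂t_j], i,j = 0,...,6, of the numerators of the Ramanujan-type system R, evaluated at the point T0 = (1/5, −25, −35, −6, 0, −1, −15). Then for every integer n ≥ 2 the matrix A0 + 5n·I (I the 7×7 identity) is invertible; consequently the formal power series solution h_i = Σ_{n≥0} t_{i,n} q^n of R (with ṫ = 5q d/dq) is uniquely determined by the initial data T0 and T1 = (24, −2250, −5350, −355, 1, 1875, 4675). -/
open PowerSeries

/-- The polynomial numerators Pᵢ of the Ramanujan-type system `t5·ṫᵢ = Pᵢ(t)`. -/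
def P {R : Type*} [CommRing R] (t : Fin 7 → R) : Fin 7 → R :=
  ![6*5^4*(t 0)^5 + t 0*t 3 - 5^4*t 4,
    -(5^8)*(t 0)^6 + 5^5*(t 0)^4*t 1 + 5^8*t 0*t 4 + t 1*t 3,
    -(3*5^9)*(t 0)^7 - 5^4*(t 0)^5*t 1 + 2*5^5*(t 0)^4*t 2 + 3*5^9*(t 0)^2*t 4
      + 5^4*t 1*t 4 + 2*t 2*t 3,
    -(5^10)*(t 0)^8 - 5^4*(t 0)^5*t 2 + 3*5^5*(t 0)^4*t 3 + 5^10*(t 0)^3*t 4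
      + 5^4*t 2*t 4 + 3*(t 3)^2,
    5^6*(t 0)^4*t 4 + 5*t 3*t 4,
    -(5^4)*(t 0)^5*t 6 + 3*5^5*(t 0)^4*t 5 + 2*t 3*t 5 + 5^4*t 4*t 6,
    3*5^5*(t 0)^4*t 6 - 5^5*(t 0)^3*t 5 - 2*t 2*t 5 + 3*t 3*t 6]

/-- Initial coefficients T₀. -/
noncomputable def T0 : Fin 7 → ℂ := ![1/5, -25, -35, -6, 0, -1, -15]

/-- Initial coefficients T₁. -/
noncomputable def T1 : Fin 7 → ℂ := ![24, -2250, -5350, -355, 1, 1875, 4675]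

/-- The Jacobian matrix A₀ = [∂Pᵢ/∂tⱼ] evaluated at T₀. -/
noncomputable def A0 : Matrix (Fin 7) (Fin 7) ℂ :=
  fun i j => deriv (fun s : ℂ => P (Function.update T0 j s) i) (T0 j)

/-- The derivation ṫ = 5·q·d/dq on formal power series in q. -/
noncomputable def Dq (f : PowerSeries ℂ) : PowerSeries ℂ :=
  PowerSeries.mk fun n => 5 * (n : ℂ) * PowerSeries.coeff n f

/-- A formal power series solution of the system `t5·ṫᵢ = Pᵢ(t)`. -/
def IsSol (h : Fin 7 → PowerSeries ℂ) : Prop :=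
  ∀ i : Fin 7, h 5 * Dq (h i) = P h i

/-! If two solutions agree modulo `q^n` with `n ≥ 2`, the `q^n`-coefficient of `t5 · ṫᵢ = Pᵢ(t)`
is linear in the differences `δ` of their `q^n`-coefficients: on the left only `t5(0) · 5n · δᵢ`
survives, with `t5(0) = -1`, and on the right products of two differences vanish modulo
`q^(n+1)`, so `Pᵢ` contributes its gradient at the constant terms `T0`, i.e. `(A0 δ)ᵢ`. Hence
`(A0 + 5n) δ = 0`. Invertibility of `A0 + 5n` follows from `A0⁴ (A0 + 5) = 0`: the only
eigenvalues of `A0` are `0` and `-5`. -/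

@[simp]
theorem Derivation.map_ofNat {R A M : Type*} [CommSemiring R] [CommSemiring A] [AddCommMonoid M]
    [Algebra R A] [Module A M] [Module R M] (D : Derivation R A M) (n : ℕ) [n.AtLeastTwo] :
    D (no_index (OfNat.ofNat n : A)) = 0 :=
  D.map_natCast n

theorem MvPolynomial.hasDerivAt_eval_update {𝕜 σ : Type*} [NontriviallyNormedField 𝕜]
    [DecidableEq σ] (F : MvPolynomial σ 𝕜) (x : σ → 𝕜) (j : σ) :
    HasDerivAt (fun s => eval (Function.update x j s) F) (eval x (pderiv j F)) (x j) := by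
  induction F using MvPolynomial.induction_on with
  | C a => simpa using hasDerivAt_const (x j) a
  | add F G hF hG => simp only [map_add]; exact hF.add hG
  | mul_X F k hF =>
    have hX : HasDerivAt (fun s => Function.update x j s k) (Pi.single (M := fun _ => 𝕜) j 1 k)
        (x j) := by
      rcases eq_or_ne k j with rfl | hkj
      · simpa using hasDerivAt_id' (x k)
      · simpa [Function.update_of_ne hkj, hkj] using hasDerivAt_const (x j) (x k)
    have hpderiv : eval x (pderiv j (F * X k)) =
        eval x (pderiv j F) * x k + eval x F * Pi.single (M := fun _ => 𝕜) j 1 k := by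
      rcases eq_or_ne k j with rfl | hkj <;> simp [Derivation.leibniz, pderiv_X, *] <;> ring
    have := hF.fun_mul hX
    rw [Function.update_eq_self] at this
    simpa only [map_mul, eval_X, hpderiv] using this

theorem MvPolynomial.aeval_sub_aeval_mem {R S σ : Type*} [CommRing R] [CommRing S] [Algebra R S]
    (F : MvPolynomial σ R) {I : Ideal S} {x y : σ → S} (h : ∀ j, x j - y j ∈ I) :
    aeval x F - aeval y F ∈ I := by
  rw [← Ideal.Quotient.eq, ← Ideal.Quotient.mkₐ_eq_mk R, ← AlgHom.comp_apply, ← AlgHom.comp_apply,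
    comp_aeval, comp_aeval]
  congr 2
  ext j
  exact Ideal.Quotient.eq.mpr (h j)

namespace PowerSeries

variable {R : Type*} [CommRing R]

theorem constantCoeff_aeval {σ : Type*} (F : MvPolynomial σ R) (x : σ → R⟦X⟧) :
    constantCoeff (MvPolynomial.aeval x F) =
      MvPolynomial.eval (fun j => constantCoeff (x j)) F := by
  rw [MvPolynomial.aeval_def, MvPolynomial.eval₂_comp_left]
  have : constantCoeff.comp (algebraMap R R⟦X⟧) = RingHom.id R := by
    ext; simp
  rw [this]
  rfl

theorem coeff_mul_sub_coeff_mul {n : ℕ} (hn : n ≠ 0) {a a' b b' : R⟦X⟧}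
    (ha : X ^ n ∣ a - a') (hb : X ^ n ∣ b - b') :
    coeff n (a * b) - coeff n (a' * b') =
      constantCoeff a * (coeff n b - coeff n b') + (coeff n a - coeff n a') * constantCoeff b := by
  obtain ⟨u, hu⟩ := ha
  obtain ⟨w, hw⟩ := hb
  obtain rfl : a' = a - X ^ n * u := by rw [← hu]; ring
  obtain rfl : b' = b - X ^ n * w := by rw [← hw]; ring
  have hprod : a * b - (a - X ^ n * u) * (b - X ^ n * w) =
      X ^ n * (a * w + u * b) - X ^ n * (X ^ n * (u * w)) := by ring
  rw [← map_sub, ← map_sub, ← map_sub, hprod, sub_sub_cancel, sub_sub_cancel]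
  simp [coeff_X_pow_mul', hn, coeff_zero_eq_constantCoeff_apply]

theorem coeff_aeval_sub_coeff_aeval {σ : Type*} [Fintype σ] [DecidableEq σ]
    (F : MvPolynomial σ R) {n : ℕ} (hn : n ≠ 0) {x y : σ → R⟦X⟧} (h : ∀ j, X ^ n ∣ x j - y j) :
    coeff n (MvPolynomial.aeval x F) - coeff n (MvPolynomial.aeval y F) =
      ∑ j, MvPolynomial.eval (fun i => constantCoeff (x i)) (MvPolynomial.pderiv j F) *
        (coeff n (x j) - coeff n (y j)) := by
  induction F using MvPolynomial.induction_on with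
  | C a => simp [coeff_C, hn]
  | add F G hF hG =>
    simp only [map_add, add_mul, Finset.sum_add_distrib, ← hF, ← hG]
    ring
  | mul_X F k hF =>
    have hF_dvd : X ^ n ∣ MvPolynomial.aeval x F - MvPolynomial.aeval y F := by
      simpa only [Ideal.mem_span_singleton] using F.aeval_sub_aeval_mem (I := Ideal.span {X ^ n})
        fun j => Ideal.mem_span_singleton.mpr (h j)
    have hpderiv (j : σ) : MvPolynomial.eval (fun i => constantCoeff (x i))
        (MvPolynomial.pderiv j (F * MvPolynomial.X k)) =
          MvPolynomial.eval (fun i => constantCoeff (x i)) (MvPolynomial.pderiv j F) *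
            constantCoeff (x k) +
          if k = j then MvPolynomial.eval (fun i => constantCoeff (x i)) F else 0 := by
      split_ifs <;> simp [Derivation.leibniz, MvPolynomial.pderiv_X, *, add_comm, mul_comm]
    simp only [map_mul, MvPolynomial.aeval_X]
    rw [coeff_mul_sub_coeff_mul hn hF_dvd (h k), hF, constantCoeff_aeval]
    simp only [hpderiv, add_mul, Finset.sum_add_distrib, ite_mul, zero_mul, Finset.sum_ite_eq,
      Finset.mem_univ, if_true]
    rw [Finset.sum_mul, add_comm]
    congr 1
    exact Finset.sum_congr rfl fun j _ => by ring

end PowerSeries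

theorem spectrum.isRoot_of_aeval_eq_zero {𝕜 A : Type*} [Field 𝕜] [Ring A] [Algebra 𝕜 A]
    [Nontrivial A] {a : A} {p : Polynomial 𝕜} (hp : Polynomial.aeval a p = 0) {μ : 𝕜}
    (hμ : μ ∈ spectrum 𝕜 a) : p.IsRoot μ := by
  have := spectrum.subset_polynomial_aeval a p ⟨μ, hμ, rfl⟩
  rwa [hp, spectrum.zero_eq, Set.mem_singleton_iff] at this

theorem isUnit_add_smul_one_of_aeval_eq_zero {𝕜 A : Type*} [Field 𝕜] [Ring A] [Algebra 𝕜 A]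
    [Nontrivial A] {a : A} {p : Polynomial 𝕜} (hp : Polynomial.aeval a p = 0) {x : 𝕜}
    (hx : ¬ p.IsRoot (-x)) : IsUnit (a + x • 1) := by
  have : -x ∉ spectrum 𝕜 a := fun h => hx (spectrum.isRoot_of_aeval_eq_zero hp h)
  rwa [spectrum.notMem_iff, Algebra.algebraMap_eq_smul_one, neg_smul, ← neg_add', IsUnit.neg_iff,
    add_comm] at this

theorem map_P {R S : Type*} [CommRing R] [CommRing S] (f : R →+* S) (t : Fin 7 → R) (i : Fin 7) :
    f (P t i) = P (f ∘ t) i := by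
  fin_cases i <;> simp [P, map_ofNat]

noncomputable def mvPolyP : Fin 7 → MvPolynomial (Fin 7) ℂ := P MvPolynomial.X

theorem aeval_mvPolyP {S : Type*} [CommRing S] [Algebra ℂ S] (t : Fin 7 → S) (i : Fin 7) :
    MvPolynomial.aeval t (mvPolyP i) = P t i := by
  rw [mvPolyP, ← AlgHom.coe_toRingHom, map_P]
  congr 1
  ext j
  simp

theorem eval_mvPolyP (t : Fin 7 → ℂ) (i : Fin 7) : MvPolynomial.eval t (mvPolyP i) = P t i :=
  aeval_mvPolyP t i

theorem A0_apply (i j : Fin 7) :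
    A0 i j = MvPolynomial.eval T0 (MvPolynomial.pderiv j (mvPolyP i)) := by
  have h := ((mvPolyP i).hasDerivAt_eval_update T0 j).deriv
  simp only [eval_mvPolyP] at h
  exact h

-- `5 • A0` has integer entries, so its annihilating polynomial can be checked by `decide`.
def fiveA0 : Matrix (Fin 7) (Fin 7) ℤ :=
  !![120, 0, 0, 1, -3125, 0, 0;
    -16250, -5, 0, -125, 390625, 0, 0;
    -47500, -1, -10, -350, 1093750, 0, 0;
    -13125, 0, -1, -105, 281250, 0, 0;
    0, 0, 0, 0, -25, 0, 0;
    -1125, 0, 0, -10, -46875, 15, -1;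
    -20625, 0, 10, -225, 0, 225, -15]

theorem smul_A0_eq : (5 : ℂ) • A0 = fiveA0.map (↑) := by
  ext i j
  rw [Matrix.smul_apply, A0_apply, Matrix.map_apply]
  fin_cases i <;> fin_cases j <;>
    simp [mvPolyP, P, fiveA0, T0, Derivation.leibniz, Derivation.leibniz_pow,
      MvPolynomial.pderiv_X] <;>
    norm_num

theorem fiveA0_pow_four_mul : fiveA0 ^ 4 * (fiveA0 + 25) = 0 := by
  decide

theorem aeval_A0 :
    Polynomial.aeval A0 (Polynomial.X ^ 4 * (Polynomial.X + Polynomial.C (5 : ℂ))) = 0 := by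
  have h := congrArg (Int.castRingHom ℂ).mapMatrix fiveA0_pow_four_mul
  simp only [map_mul, map_pow, map_add, map_ofNat, map_zero, RingHom.mapMatrix_apply,
    Int.coe_castRingHom] at h
  have h25 : (5 : ℂ) • A0 + 25 = (5 : ℂ) • (A0 + (5 : ℂ) • 1) := by
    rw [smul_add, smul_smul, ← Algebra.algebraMap_eq_smul_one]
    norm_num
    exact (map_ofNat _ 25).symm
  rw [← smul_A0_eq, h25, smul_pow, smul_mul_smul_comm, smul_eq_zero_iff_right (by norm_num)] at h
  simpa only [map_mul, map_pow, map_add, Polynomial.aeval_X, Polynomial.aeval_C,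
    Algebra.algebraMap_eq_smul_one] using h

theorem isUnit_A0_add_smul_one {n : ℕ} (hn : 2 ≤ n) :
    IsUnit (A0 + (5 * (n : ℂ)) • (1 : Matrix (Fin 7) (Fin 7) ℂ)) := by
  refine isUnit_add_smul_one_of_aeval_eq_zero aeval_A0 ?_
  have hn0 : (n : ℂ) ≠ 0 := by exact_mod_cast (by omega : n ≠ 0)
  have hn1 : (n : ℂ) ≠ 1 := by exact_mod_cast (by omega : n ≠ 1)
  simp only [Polynomial.IsRoot, Polynomial.eval_mul, Polynomial.eval_pow, Polynomial.eval_add,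
    Polynomial.eval_X, Polynomial.eval_C]
  refine mul_ne_zero (pow_ne_zero _ (neg_ne_zero.mpr (mul_ne_zero (by norm_num) hn0)))
    fun h => hn1 ?_
  linear_combination -h / 5

theorem coeff_Dq (n : ℕ) (f : PowerSeries ℂ) : coeff n (Dq f) = 5 * n * coeff n f :=
  coeff_mk _ _

theorem constantCoeff_Dq (f : PowerSeries ℂ) : constantCoeff (Dq f) = 0 := by
  rw [← coeff_zero_eq_constantCoeff_apply, coeff_Dq]
  simp

theorem X_pow_dvd_Dq_sub {n : ℕ} {f g : PowerSeries ℂ} (h : X ^ n ∣ f - g) :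
    X ^ n ∣ Dq f - Dq g := by
  rw [X_pow_dvd_iff] at h ⊢
  intro m hm
  rw [map_sub, coeff_Dq, coeff_Dq, ← mul_sub, ← map_sub, h m hm, mul_zero]

open scoped Matrix in
theorem coeff_P_sub_coeff_P {n : ℕ} (hn : n ≠ 0) {h h' : Fin 7 → PowerSeries ℂ}
    (h0 : ∀ i, constantCoeff (h i) = T0 i) (hh : ∀ j, X ^ n ∣ h j - h' j) (i : Fin 7) :
    coeff n (P h i) - coeff n (P h' i) = (A0 *ᵥ fun j => coeff n (h j) - coeff n (h' j)) i := by
  rw [← aeval_mvPolyP, ← aeval_mvPolyP, coeff_aeval_sub_coeff_aeval _ hn hh, funext h0]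
  simp only [Matrix.mulVec, dotProduct, A0_apply]

open scoped Matrix in
theorem IsSol.X_pow_succ_dvd_sub {h h' : Fin 7 → PowerSeries ℂ} (hs : IsSol h) (hs' : IsSol h')
    (h0 : ∀ i, constantCoeff (h i) = T0 i) {n : ℕ} (hn : 2 ≤ n) (hh : ∀ j, X ^ n ∣ h j - h' j)
    (j : Fin 7) : X ^ (n + 1) ∣ h j - h' j := by
  have hn0 : n ≠ 0 := by omega
  have hker : (A0 + (5 * (n : ℂ)) • 1) *ᵥ (fun j => coeff n (h j) - coeff n (h' j)) = 0 := by
    funext i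
    have hlhs := coeff_mul_sub_coeff_mul hn0 (hh 5) (X_pow_dvd_Dq_sub (hh i))
    rw [h0 5, show T0 5 = -1 from rfl, constantCoeff_Dq, coeff_Dq, coeff_Dq, hs i, hs' i,
      coeff_P_sub_coeff_P hn0 h0 hh] at hlhs
    rw [Matrix.add_mulVec, Matrix.smul_mulVec, Matrix.one_mulVec, Pi.add_apply, hlhs]
    simp only [Pi.smul_apply, Pi.zero_apply, smul_eq_mul]
    ring
  have hδ := Matrix.mulVec_injective_iff_isUnit.mpr (isUnit_A0_add_smul_one hn)
    (hker.trans (Matrix.mulVec_zero _).symm)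
  rw [X_pow_dvd_iff]
  intro m hm
  rcases Nat.lt_succ_iff_lt_or_eq.mp hm with hm | rfl
  · exact X_pow_dvd_iff.mp (hh j) m hm
  · simpa [sub_eq_zero] using congrFun hδ j

theorem IsSol.eq_of_coeff_one_eq {h h' : Fin 7 → PowerSeries ℂ} (hs : IsSol h)
    (hs' : IsSol h') (h0 : ∀ i, coeff 0 (h i) = T0 i) (h0' : ∀ i, coeff 0 (h' i) = T0 i)
    (h1 : ∀ i, coeff 1 (h i) = coeff 1 (h' i)) : h = h' := by
  have hdvd (n : ℕ) (hn : 2 ≤ n) (j : Fin 7) : X ^ n ∣ h j - h' j := by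
    induction n, hn using Nat.le_induction generalizing j with
    | base =>
      rw [X_pow_dvd_iff]
      intro m hm
      interval_cases m
      · rw [map_sub, h0, h0', sub_self]
      · rw [map_sub, h1, sub_self]
    | succ n hn ih =>
      refine hs.X_pow_succ_dvd_sub hs' (fun i => ?_) hn ih j
      rw [← coeff_zero_eq_constantCoeff_apply, h0]
  funext j
  rw [← sub_eq_zero]
  ext m
  simpa using X_pow_dvd_iff.mp (hdvd (m + 2) (by omega) j) m (by omega)

theorem stmt19 :
    (∀ n : ℕ, 2 ≤ n →
      IsUnit (A0 + (5*(n : ℂ)) • (1 : Matrix (Fin 7) (Fin 7) ℂ))) ∧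
    (∀ h h' : Fin 7 → PowerSeries ℂ, IsSol h → IsSol h' →
      (∀ i, PowerSeries.coeff 0 (h i) = T0 i) →
      (∀ i, PowerSeries.coeff 1 (h i) = T1 i) →
      (∀ i, PowerSeries.coeff 0 (h' i) = T0 i) →
      (∀ i, PowerSeries.coeff 1 (h' i) = T1 i) →
      h = h') := by
  exact ⟨fun n hn => isUnit_A0_add_smul_one hn, fun h h' hs hs' h0 h1 h0' h1' =>
    hs.eq_of_coeff_one_eq hs' h0 h0' fun i => (h1 i).trans (h1' i).symm⟩
end
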